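/- If T is a tournament on 8 vertices such that both T and its dual Tʳ have domination number at least 3, then T is near regular; moreover if a vertex x has in-degree 3 then I(x) induces a directed 3-cycle, and if y has out-degree 3 then O(y) induces a directed 3-cycle. -/
import Mathlib


open Finset

structure Tournament (V : Type) where
  beats : V → V → Bool
  asymm : ∀ u v : V, u ≠ v → beats u v = !beats v u
  irrefl : ∀ v : V, beats v v = false

def Tournament.dual {V : Type} (T : Tournament V) : Tournament V where
  beats u v := T.beats v u
  asymm u v h := T.asymm v u h.symm
  irrefl v := T.irrefl v

variable {V : Type} [Fintype V] [DecidableEq V]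

def outset (T : Tournament V) (v : V) : Finset V :=
  univ.filter (fun u => T.beats v u = true)

def inset (T : Tournament V) (v : V) : Finset V :=
  univ.filter (fun u => T.beats u v = true)

def OutQuadrangular (T : Tournament V) : Prop :=
  ∀ u v : V, u ≠ v → (outset T u ∩ outset T v).card ≠ 1

def InQuadrangular (T : Tournament V) : Prop :=
  ∀ u v : V, u ≠ v → (inset T u ∩ inset T v).card ≠ 1

def Quadrangular (T : Tournament V) : Prop :=
  OutQuadrangular T ∧ InQuadrangular T

def NearRegular (T : Tournament V) : Prop :=
  ∀ u v : V, (outset T u).card ≤ (outset T v).card + 1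

def Dominating (T : Tournament V) (S : Finset V) : Prop :=
  ∀ v : V, v ∈ S ∨ ∃ u ∈ S, T.beats u v = true

def pairOutUnion (T : Tournament V) (S : Finset V) : Finset V :=
  S.biUnion fun u => S.biUnion fun v => if u = v then ∅ else outset T u ∩ outset T v

def pairInUnion (T : Tournament V) (S : Finset V) : Finset V :=
  S.biUnion fun u => S.biUnion fun v => if u = v then ∅ else inset T u ∩ inset T v

def StronglyQuadrangular (T : Tournament V) : Prop :=
  (∀ S : Finset V, (∀ u ∈ S, ∃ v ∈ S, u ≠ v ∧ (outset T u ∩ outset T v).Nonempty) →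
    S.card ≤ (pairOutUnion T S).card) ∧
  (∀ S : Finset V, (∀ u ∈ S, ∃ v ∈ S, u ≠ v ∧ (inset T u ∩ inset T v).Nonempty) →
    S.card ≤ (pairInUnion T S).card)

lemma beats_total (T : Tournament V) {u v : V} (h : u ≠ v) :
    T.beats u v = true ∨ T.beats v u = true := by
  have := T.asymm u v h
  cases hb : T.beats v u <;> simp [hb] at this <;> simp [this]

lemma mem_outset {T : Tournament V} {u v : V} : u ∈ outset T v ↔ T.beats v u = true := by
  simp [outset]

lemma mem_inset {T : Tournament V} {u v : V} : u ∈ inset T v ↔ T.beats u v = true := by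
  simp [inset]

lemma outset_dual (T : Tournament V) (v : V) : outset T.dual v = inset T v := rfl

lemma inset_dual (T : Tournament V) (v : V) : inset T.dual v = outset T v := rfl

lemma beats_ne {T : Tournament V} {u v : V} (h : T.beats u v = true) : u ≠ v := by
  rintro rfl; rw [T.irrefl] at h; exact absurd h (by simp)

lemma out_in_card (T : Tournament V) (hcard : Fintype.card V = 8) (v : V) :
    (outset T v).card + (inset T v).card = 7 := by
  have hdisj : Disjoint (outset T v) (inset T v) := by
    rw [Finset.disjoint_left]
    intro u hu hu'
    rw [mem_outset] at hu; rw [mem_inset] at hu'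
    have hne : u ≠ v := beats_ne hu'
    have := T.asymm u v hne
    rw [hu, hu'] at this; simp at this
  have hunion : outset T v ∪ inset T v = Finset.univ.erase v := by
    ext u
    simp only [Finset.mem_union, mem_outset, mem_inset, Finset.mem_erase, Finset.mem_univ,
      and_true]
    constructor
    · rintro (h | h)
      · exact (beats_ne h).symm
      · exact beats_ne h
    · intro h
      rcases beats_total T h with h' | h'
      · right; exact h'
      · left; exact h'
  have := Finset.card_union_of_disjoint hdisj
  rw [hunion, Finset.card_erase_of_mem (Finset.mem_univ v), Finset.card_univ, hcard] at this
  omega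

lemma outdeg_le_four (T : Tournament V) (hcard : Fintype.card V = 8)
    (hd : ∀ S : Finset V, Dominating T S → 3 ≤ S.card) (v : V) :
    (outset T v).card ≤ 4 := by
  by_contra h
  push_neg at h
  set R := Finset.univ \ insert v (outset T v) with hR
  have hvout : v ∉ outset T v := by
    rw [mem_outset, T.irrefl]; simp
  have hRcard : R.card ≤ 2 := by
    have h1 : (insert v (outset T v)).card = (outset T v).card + 1 := by
      rw [Finset.card_insert_of_notMem hvout]
    have h2 := Finset.card_sdiff_of_subset (Finset.subset_univ (insert v (outset T v)))
    rw [Finset.card_univ, hcard, h1] at h2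
    rw [hR]
    omega
  have hmemR : ∀ u : V, u ∉ R → u = v ∨ T.beats v u = true := by
    intro u hu
    rw [hR, Finset.mem_sdiff] at hu
    push_neg at hu
    have := hu (Finset.mem_univ u)
    rcases Finset.mem_insert.mp this with h' | h'
    · left; exact h'
    · right; exact mem_outset.mp h'
  rcases R.eq_empty_or_nonempty with hRe | hRne
  · have hdom : Dominating T {v} := by
      intro u
      rcases hmemR u (by rw [hRe]; simp) with rfl | hb
      · left; simp
      · right; exact ⟨v, by simp, hb⟩
    have := hd _ hdom
    simp at this
  · have hw : ∃ w ∈ R, ∀ u ∈ R, u = w ∨ T.beats w u = true := by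
      have h12 : R.card = 1 ∨ R.card = 2 := by
        have := Finset.card_pos.mpr hRne
        omega
      rcases h12 with h1 | h2
      · obtain ⟨w, hw⟩ := Finset.card_eq_one.mp h1
        refine ⟨w, by rw [hw]; simp, ?_⟩
        intro u hu
        rw [hw] at hu; simp at hu
        left; exact hu
      · obtain ⟨w, z, hwz, hwzR⟩ := Finset.card_eq_two.mp h2
        rcases beats_total T hwz with hb | hb
        · refine ⟨w, by rw [hwzR]; simp, ?_⟩
          intro u hu
          rw [hwzR] at hu; simp at hu
          rcases hu with rfl | rfl
          · left; rfl
          · right; exact hb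
        · refine ⟨z, by rw [hwzR]; simp, ?_⟩
          intro u hu
          rw [hwzR] at hu; simp at hu
          rcases hu with rfl | rfl
          · right; exact hb
          · left; rfl
    obtain ⟨w, hwR, hwdom⟩ := hw
    have hdom : Dominating T {v, w} := by
      intro u
      by_cases huR : u ∈ R
      · rcases hwdom u huR with rfl | hb
        · left; simp
        · right; exact ⟨w, by simp, hb⟩
      · rcases hmemR u huR with rfl | hb
        · left; simp
        · right; exact ⟨v, by simp, hb⟩
    have h3 := hd _ hdom
    have : ({v, w} : Finset V).card ≤ 2 := Finset.card_insert_le _ _ |>.trans (by simp)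
    omega

lemma inset_cycle (T : Tournament V)
    (hd : ∀ S : Finset V, Dominating T S → 3 ≤ S.card) (x : V)
    (hx : (inset T x).card = 3) :
    ∃ a b c : V, a ≠ b ∧ a ≠ c ∧ b ≠ c ∧ inset T x = {a, b, c} ∧
      T.beats a b = true ∧ T.beats b c = true ∧ T.beats c a = true := by
  obtain ⟨a, b, c, hab, hac, hbc, hset⟩ := Finset.card_eq_three.mp hx
  have key : ∀ w : V, w ∈ inset T x → (∀ u ∈ inset T x, u = w ∨ T.beats w u = true) → False := by
    intro w hw hall
    have hwx : T.beats w x = true := mem_inset.mp hw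
    have hdom : Dominating T {x, w} := by
      intro u
      by_cases h1 : u = x
      · left; simp [h1]
      · by_cases h2 : T.beats x u = true
        · right; exact ⟨x, by simp, h2⟩
        · have hux : T.beats u x = true := by
            rcases beats_total T (show u ≠ x from h1) with h | h
            · exact h
            · exact absurd h h2
          have hu : u ∈ inset T x := mem_inset.mpr hux
          rcases hall u hu with rfl | h
          · left; simp
          · right; exact ⟨w, by simp, h⟩
    have h3 := hd _ hdom
    have : ({x, w} : Finset V).card ≤ 2 := Finset.card_insert_le _ _ |>.trans (by simp)
    omega
  have hmem : ∀ u ∈ inset T x, u = a ∨ u = b ∨ u = c := by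
    intro u hu; rw [hset] at hu; simpa using hu
  have haI : a ∈ inset T x := by rw [hset]; simp
  have hbI : b ∈ inset T x := by rw [hset]; simp
  have hcI : c ∈ inset T x := by rw [hset]; simp
  cases h1 : T.beats a b with
  | true =>
    cases h2 : T.beats b c with
    | true =>
      cases h3 : T.beats a c with
      | true =>
        exact absurd (key a haI (by
          intro u hu
          rcases hmem u hu with rfl | rfl | rfl
          · left; rfl
          · right; exact h1
          · right; exact h3)) (fun h => h)
      | false =>
        have hca : T.beats c a = true := by
          rcases beats_total T hac with h | h
          · rw [h] at h3; exact absurd h3 (by simp)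
          · exact h
        exact ⟨a, b, c, hab, hac, hbc, hset, h1, h2, hca⟩
    | false =>
      have hcb : T.beats c b = true := by
        rcases beats_total T hbc with h | h
        · rw [h] at h2; exact absurd h2 (by simp)
        · exact h
      cases h3 : T.beats a c with
      | true =>
        exact absurd (key a haI (by
          intro u hu
          rcases hmem u hu with rfl | rfl | rfl
          · left; rfl
          · right; exact h1
          · right; exact h3)) (fun h => h)
      | false =>
        have hca : T.beats c a = true := by
          rcases beats_total T hac with h | h
          · rw [h] at h3; exact absurd h3 (by simp)
          · exact h
        exact absurd (key c hcI (by
          intro u hu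
          rcases hmem u hu with rfl | rfl | rfl
          · right; exact hca
          · right; exact hcb
          · left; rfl)) (fun h => h)
  | false =>
    have hba : T.beats b a = true := by
      rcases beats_total T hab with h | h
      · rw [h] at h1; exact absurd h1 (by simp)
      · exact h
    cases h2 : T.beats b c with
    | true =>
      exact absurd (key b hbI (by
        intro u hu
        rcases hmem u hu with rfl | rfl | rfl
        · right; exact hba
        · left; rfl
        · right; exact h2)) (fun h => h)
    | false =>
      have hcb : T.beats c b = true := by
        rcases beats_total T hbc with h | h
        · rw [h] at h2; exact absurd h2 (by simp)
        · exact h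
      cases h3 : T.beats a c with
      | true =>
        refine ⟨a, c, b, hac, hab, hbc.symm, ?_, h3, hcb, hba⟩
        rw [hset]; ext u; simp; tauto
      | false =>
        have hca : T.beats c a = true := by
          rcases beats_total T hac with h | h
          · rw [h] at h3; exact absurd h3 (by simp)
          · exact h
        exact absurd (key c hcI (by
          intro u hu
          rcases hmem u hu with rfl | rfl | rfl
          · right; exact hca
          · right; exact hcb
          · left; rfl)) (fun h => h)

theorem stmt_5 (T : Tournament V) (hcard : Fintype.card V = 8)
    (hd : ∀ S : Finset V, Dominating T S → 3 ≤ S.card)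
    (hd' : ∀ S : Finset V, Dominating T.dual S → 3 ≤ S.card) :
    NearRegular T ∧
    (∀ x : V, (inset T x).card = 3 →
      ∃ a b c : V, a ≠ b ∧ a ≠ c ∧ b ≠ c ∧ inset T x = {a, b, c} ∧
        T.beats a b = true ∧ T.beats b c = true ∧ T.beats c a = true) ∧
    (∀ y : V, (outset T y).card = 3 →
      ∃ a b c : V, a ≠ b ∧ a ≠ c ∧ b ≠ c ∧ outset T y = {a, b, c} ∧
        T.beats a b = true ∧ T.beats b c = true ∧ T.beats c a = true) := by
  have hout4 : ∀ v, (outset T v).card ≤ 4 := outdeg_le_four T hcard hd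
  have hin4 : ∀ v, (inset T v).card ≤ 4 := fun v => by
    have := outdeg_le_four T.dual hcard hd' v
    rwa [outset_dual] at this
  have hout3 : ∀ v, 3 ≤ (outset T v).card := fun v => by
    have h1 := out_in_card T hcard v
    have h2 := hin4 v
    omega
  refine ⟨fun u v => by have := hout4 u; have := hout3 v; omega, inset_cycle T hd, ?_⟩
  intro y hy
  have hy' : (inset T.dual y).card = 3 := by rwa [inset_dual]
  obtain ⟨a, b, c, hab, hac, hbc, hset, h1, h2, h3⟩ := inset_cycle T.dual hd' y hy'
  rw [inset_dual] at hset
  refine ⟨a, c, b, hac, hab, hbc.symm, ?_, h3, h2, h1⟩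
  rw [hset]; ext u; simp; tauto
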